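/- arXiv:1903.08379 — 2 statements merged into one kernel-verified Lean document; each statement's English description precedes it below -/
import Mathlib

section
/- For all m ≥ 1, all 1 ≤ r ≤ m−1, and all n ≥ k ≥ 1, the higher order Stirling numbers satisfy S^(m)(n,k) = Σ_{i=k}^n S^(m−r)(i,k) · S^(r)(n,i). -/
/-- `m`-th order ("hyper") partitions of a finite set `s`:
a chain `(P₁, …, P_m)` where `P₁` is a partition of `s` and each `P_{j+1}`
is a partition of the set of blocks of `P_j`. For `m = 0` it is `s` itself
(a single trivial object). -/
def HyperPartition : (m : ℕ) → {α : Type} → [DecidableEq α] → Finset α → Type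
  | 0, _, _, _ => PUnit
  | m + 1, _, _, s => (P : Finpartition s) × HyperPartition m P.parts

/-- The number of blocks of the outermost partition of a hyper partition
(for `m = 0`, by convention, the cardinality of the underlying set). -/
def HyperPartition.outerBlocks :
    (m : ℕ) → {α : Type} → [DecidableEq α] → {s : Finset α} →
      HyperPartition m s → ℕ
  | 0, _, _, s, _ => s.card
  | 1, _, _, _, p => p.1.parts.card
  | m + 2, _, _, _, p => HyperPartition.outerBlocks (m + 1) p.2

/-- `|℘ₙ^(m)|`: the number of `m`-th order partitions of an `n`-element set. -/
noncomputable def hyperBell (m n : ℕ) : ℕ :=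
  Nat.card (HyperPartition m (Finset.univ : Finset (Fin n)))

/-- The `m`-th order Stirling number `S^(m)(n,k)`: the number of `m`-th order
partitions of an `n`-element set whose outermost partition has exactly `k` blocks. -/
noncomputable def hyperStirling (m n k : ℕ) : ℕ :=
  Nat.card {p : HyperPartition m (Finset.univ : Finset (Fin n)) //
    HyperPartition.outerBlocks m p = k}

/-- The ordinary Stirling number of the second kind `S(n,k)`: the number of
set partitions of an `n`-element set into exactly `k` blocks. -/
noncomputable def stirling (n k : ℕ) : ℕ :=
  Nat.card {P : Finpartition (Finset.univ : Finset (Fin n)) // P.parts.card = k}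

/-- Composition `f(g(x))` of formal power series (intended for `g` with zero
constant term, in which case `coeff n (g ^ i) = 0` for `i > n`). -/
noncomputable def psComp (f g : PowerSeries ℚ) : PowerSeries ℚ :=
  PowerSeries.mk fun n =>
    PowerSeries.coeff (R := ℚ) n
      (∑ i ∈ Finset.range (n + 1), PowerSeries.C (R := ℚ) (PowerSeries.coeff (R := ℚ) i f) * g ^ i)

/-- The iterated exponential series: `E₀ = exp x`, `E_{m+1} = exp (E_m - 1)`. -/
noncomputable def E : ℕ → PowerSeries ℚ
  | 0 => PowerSeries.exp ℚ
  | m + 1 => psComp (PowerSeries.exp ℚ) (E m - 1)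

/-- The `m`-th order Bell number `Bₙ^(m) = n! · [xⁿ] E_m(x)`. -/
noncomputable def bell (m n : ℕ) : ℚ :=
  (n.factorial : ℚ) * PowerSeries.coeff (R := ℚ) n (E m)

/-! Cutting an `(a + r)`-th order partition after its first `r` levels leaves an `r`-th order
partition whose outermost partition has some number `i` of blocks, together with an `a`-th order
partition of that `i`-element set of blocks. Since partitions can be transported along injections,
the number of the latter with `k` outer blocks depends only on `i` and is `S^(a)(i,k)`; summing
over `i` gives `S^(a+r)(n,k) = Σ_i S^(a)(i,k) S^(r)(n,i)`, and the theorem is the case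
`a = m - r`. -/

namespace Finpartition

variable {α β : Type*} [DecidableEq α] [DecidableEq β] {s : Finset α}

def finsetMap (f : α ↪ β) (P : Finpartition s) : Finpartition (s.map f) :=
  ofExistsUnique (P.parts.map (Finset.mapEmbedding f).toEmbedding)
    (by
      simp only [Finset.mem_map, RelEmbedding.coe_toEmbedding, Finset.mapEmbedding_apply]
      rintro _ ⟨u, hu, rfl⟩
      exact Finset.map_subset_map.2 (P.le hu))
    (by
      simp only [Finset.mem_map, RelEmbedding.coe_toEmbedding, Finset.mapEmbedding_apply]
      rintro _ ⟨x, hx, rfl⟩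
      obtain ⟨u, ⟨hu, hxu⟩, huniq⟩ := P.existsUnique_mem hx
      refine ⟨u.map f, ⟨⟨u, hu, rfl⟩, Finset.mem_map_of_mem f hxu⟩, ?_⟩
      rintro _ ⟨⟨v, hv, rfl⟩, hxv⟩
      rw [huniq v ⟨hv, (Finset.mem_map' f).1 hxv⟩])
    (by
      simp only [Finset.mem_map, RelEmbedding.coe_toEmbedding, Finset.mapEmbedding_apply,
        Finset.map_eq_empty, not_exists, not_and]
      rintro u hu rfl
      exact P.empty_notMem_parts hu)

theorem finsetMap_bijective (f : α ↪ β) :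
    Function.Bijective (finsetMap f : Finpartition s → Finpartition (s.map f)) := by
  set F := (Finset.mapEmbedding f).toEmbedding
  refine ⟨fun P Q h ↦ Finpartition.ext (Finset.map_injective F (congrArg parts h)),
    fun Q ↦ ?_⟩
  have hQ : Q.parts ⊆ s.powerset.map F := fun t ht ↦ by
    obtain ⟨u, hu, rfl⟩ := Finset.subset_map_iff.1 (Q.le ht)
    exact Finset.mem_map_of_mem F (Finset.mem_powerset.2 hu)
  obtain ⟨U, hUs, hUQ⟩ := Finset.subset_map_iff.1 hQ
  refine ⟨ofExistsUnique U (fun u hu ↦ Finset.mem_powerset.1 (hUs hu)) ?_ ?_,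
    Finpartition.ext hUQ.symm⟩
  · intro x hx
    obtain ⟨t, ⟨ht, hxt⟩, huniq⟩ := Q.existsUnique_mem (Finset.mem_map_of_mem f hx)
    rw [hUQ, Finset.mem_map] at ht
    obtain ⟨u, hu, rfl⟩ := ht
    refine ⟨u, ⟨hu, (Finset.mem_map' f).1 hxt⟩, fun v ⟨hv, hxv⟩ ↦ F.injective ?_⟩
    exact huniq (F v) ⟨hUQ ▸ Finset.mem_map_of_mem F hv, Finset.mem_map_of_mem f hxv⟩
  · intro hU
    exact Q.empty_notMem_parts (hUQ ▸ Finset.mem_map_of_mem F hU)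

end Finpartition

namespace HyperPartition

theorem outerBlocks_succ (m : ℕ) {α : Type} [DecidableEq α] {s : Finset α}
    (p : HyperPartition (m + 1) s) : outerBlocks (m + 1) p = outerBlocks m p.2 := by
  cases m <;> rfl

instance instFinite : ∀ (m : ℕ) {α : Type} [DecidableEq α] (s : Finset α),
    Finite (HyperPartition m s)
  | 0, _, _, _ => inferInstanceAs (Finite PUnit)
  | m + 1, _, _, s =>
    have (P : Finpartition s) := instFinite m P.parts
    inferInstanceAs (Finite (Σ P : Finpartition s, HyperPartition m P.parts))

theorem outerBlocks_le_card : ∀ (m : ℕ) {α : Type} [DecidableEq α] {s : Finset α}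
    (p : HyperPartition m s), outerBlocks m p ≤ s.card
  | 0, _, _, _, _ => le_rfl
  | m + 1, _, _, _, p => by
    rw [outerBlocks_succ]
    exact (outerBlocks_le_card m p.2).trans p.1.card_parts_le_card

end HyperPartition

open HyperPartition

noncomputable def hyperStirlingOn (m : ℕ) {α : Type} [DecidableEq α] (s : Finset α) (k : ℕ) :
    ℕ :=
  Nat.card {p : HyperPartition m s // outerBlocks m p = k}

theorem hyperStirlingOn_univ (m n k : ℕ) :
    hyperStirlingOn m (Finset.univ : Finset (Fin n)) k = hyperStirling m n k :=
  rfl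

section
variable {α : Type} [DecidableEq α]

theorem hyperStirlingOn_zero (s : Finset α) (k : ℕ) :
    hyperStirlingOn 0 s k = if k = s.card then 1 else 0 := by
  split_ifs with h
  · exact Nat.card_eq_one_iff_unique.2
      ⟨⟨fun _ _ ↦ Subtype.ext rfl⟩, ⟨⟨PUnit.unit, h.symm⟩⟩⟩
  · exact Nat.card_eq_zero.2 <| .inl ⟨fun p ↦ h p.2.symm⟩

theorem hyperStirlingOn_succ (m : ℕ) (s : Finset α) (k : ℕ) :
    hyperStirlingOn (m + 1) s k = ∑ P : Finpartition s, hyperStirlingOn m P.parts k := by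
  simp only [hyperStirlingOn, ← Nat.card_sigma]
  exact Nat.card_congr
    { toFun p := ⟨p.1.1, p.1.2, (outerBlocks_succ m p.1).symm.trans p.2⟩
      invFun q := ⟨⟨q.1, q.2.1⟩, (outerBlocks_succ m ⟨q.1, q.2.1⟩).trans q.2.2⟩ }

theorem hyperStirlingOn_eq_zero_of_card_lt (m : ℕ) {s : Finset α} {k : ℕ} (h : s.card < k) :
    hyperStirlingOn m s k = 0 :=
  Nat.card_eq_zero.2 <| .inl
    ⟨fun p ↦ ((outerBlocks_le_card m p.1).trans_lt (p.2.symm ▸ h)).false⟩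

end

theorem hyperStirlingOn_map : ∀ (m : ℕ) {α β : Type} [DecidableEq α] [DecidableEq β]
    (f : α ↪ β) (s : Finset α) (k : ℕ), hyperStirlingOn m (s.map f) k = hyperStirlingOn m s k
  | 0, _, _, _, _, f, s, k => by simp only [hyperStirlingOn_zero, Finset.card_map]
  | m + 1, _, _, _, _, f, s, k => by
    rw [hyperStirlingOn_succ, hyperStirlingOn_succ,
      ← (Finpartition.finsetMap_bijective f).sum_comp]
    exact Fintype.sum_congr _ _ fun P ↦ hyperStirlingOn_map m _ P.parts k

theorem hyperStirlingOn_eq_hyperStirling (m : ℕ) {α : Type} [DecidableEq α] (s : Finset α)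
    (k : ℕ) : hyperStirlingOn m s k = hyperStirling m s.card k := by
  let e : Fin s.card ↪ α := s.equivFin.symm.toEmbedding.trans (.subtype (· ∈ s))
  have hs : Finset.univ.map e = s := by
    rw [← Finset.map_map, Finset.map_univ_equiv, Finset.univ_eq_attach, Finset.attach_map_val]
  rw [← hyperStirlingOn_univ, ← hyperStirlingOn_map m e, hs]

-- The sum runs over a range independent of `s`, so the induction needs no reindexing.
theorem hyperStirlingOn_add (a : ℕ) :
    ∀ (r : ℕ) {α : Type} [DecidableEq α] (s : Finset α) (k N : ℕ), s.card ≤ N →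
      hyperStirlingOn (a + r) s k =
        ∑ i ∈ Finset.range (N + 1), hyperStirlingOn r s i * hyperStirling a i k
  | 0, _, _, s, k, N, hN => by
    simp only [hyperStirlingOn_zero, ite_mul, one_mul, zero_mul, Finset.sum_ite_eq',
      Finset.mem_range, Nat.lt_succ_of_le hN, if_true]
    exact hyperStirlingOn_eq_hyperStirling a s k
  | r + 1, _, _, s, k, N, hN => by
    have hP (P : Finpartition s) := hyperStirlingOn_add a r P.parts k N
      (P.card_parts_le_card.trans hN)
    simp only [← add_assoc, hyperStirlingOn_succ, hP, Finset.sum_mul]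
    exact Finset.sum_comm

theorem hyperStirling_eq_zero_of_lt {m n k : ℕ} (h : n < k) : hyperStirling m n k = 0 := by
  rw [← hyperStirlingOn_univ]
  exact hyperStirlingOn_eq_zero_of_card_lt m (by simpa using h)

theorem hyperStirling_add (a r n k : ℕ) :
    hyperStirling (a + r) n k =
      ∑ i ∈ Finset.Icc k n, hyperStirling a i k * hyperStirling r n i := by
  rw [← hyperStirlingOn_univ, hyperStirlingOn_add a r _ k n (by simp)]
  simp only [hyperStirlingOn_univ, mul_comm (hyperStirling r n _)]
  refine (Finset.sum_subset (fun i hi ↦ ?_) fun i hi hik ↦ ?_).symm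
  · simp only [Finset.mem_Icc, Finset.mem_range] at hi ⊢
    omega
  · simp only [Finset.mem_Icc, Finset.mem_range, not_and, not_le] at hi hik
    rw [hyperStirling_eq_zero_of_lt (by omega), zero_mul]

theorem stmt8_general (m r n k : ℕ) (hrm : r ≤ m - 1) :
    hyperStirling m n k =
      ∑ i ∈ Finset.Icc k n, hyperStirling (m - r) i k * hyperStirling r n i := by
  rw [← hyperStirling_add, Nat.sub_add_cancel (hrm.trans (Nat.sub_le m 1))]

/-- `S^(m)(n,k) = Σ_{i=k}^n S^(m−r)(i,k) · S^(r)(n,i)` for `m ≥ 1`,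
`1 ≤ r ≤ m−1`, `n ≥ k ≥ 1`. -/
theorem stmt8 (m r n k : ℕ) (hm : 1 ≤ m) (hr : 1 ≤ r) (hrm : r ≤ m - 1)
    (hk : 1 ≤ k) (hkn : k ≤ n) :
    hyperStirling m n k =
      ∑ i ∈ Finset.Icc k n, hyperStirling (m - r) i k * hyperStirling r n i :=
  stmt8_general m r n k hrm
end

section
/- For all m ≥ 1 and n ≥ 1, the number of one-block m-th order partitions of an n-element set equals the (m−1)-th order Bell number: S^(m)(n,1) = B_n^(m−1). -/
/-!
Counting `(m+1)`-th order partitions by their first partition `P₁` gives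
`|℘ₙ^(m+1)| = ∑ₖ S(n,k) |℘ₖ^(m)|`. On the series side, associativity of substitution turns
`E_{m+1} = exp ∘ (E_m - 1)` into `E_{m+1} = E_m ∘ (exp - 1)`, and `n! [xⁿ] (eˣ - 1)ᵏ = k! S(n,k)`,
so `Bₙ^(m)` satisfies the same recursion and `|℘ₙ^(m)| = Bₙ^(m)`. The Stirling identity comes by
binomial inversion from `eʲˣ = ∑ₖ C(j,k) (eˣ - 1)ᵏ` and `jⁿ = ∑ₖ S(n,k) j(j-1)⋯(j-k+1)`, which
counts maps into a `j`-set by their partition into fibres. The latter identity holds for any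
finite set, so the number of partitions of a set into `k` blocks depends only on its size.
Finally, the outermost partition of a one-block `(m+1)`-th order partition is forced, leaving an
arbitrary `m`-th order partition.
-/

open Finset PowerSeries
open scoped Nat

theorem eq_of_forall_sum_choose_mul_eq {R : Type*} [Ring R] {a b : ℕ → R}
    (h : ∀ j, ∑ k ∈ range (j + 1), (j.choose k : R) * a k =
      ∑ k ∈ range (j + 1), (j.choose k : R) * b k) : a = b := by
  funext k
  induction k using Nat.strong_induction_on with
  | _ k ih =>
    have hk := h k
    rw [sum_range_succ, sum_range_succ, sum_congr rfl fun i hi => by rw [ih i (mem_range.1 hi)],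
      add_right_inj] at hk
    simpa using hk

theorem PowerSeries.coeff_pow_eq_zero_of_lt {R : Type*} [Semiring R] {g : R⟦X⟧}
    (hg : constantCoeff g = 0) {n i : ℕ} (h : n < i) : coeff n (g ^ i) = 0 :=
  coeff_of_lt_order n <| (le_order_pow_of_constantCoeff_eq_zero i hg).trans_lt' (mod_cast h)

theorem sum_choose_mul_coeff_exp_sub_one_pow (n j : ℕ) :
    ∑ k ∈ range (j + 1), (j.choose k : ℚ) * (n ! * coeff n ((exp ℚ - 1) ^ k)) = j ^ n := by
  have hexp : exp ℚ ^ j = ∑ k ∈ range (j + 1), C (j.choose k : ℚ) * (exp ℚ - 1) ^ k := by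
    rw [show exp ℚ = (exp ℚ - 1) + 1 by ring, add_pow]
    simp [mul_comm]
  have hcoeff := congrArg (coeff n) hexp
  rw [exp_pow_eq_rescale_exp, coeff_rescale, coeff_exp, map_sum] at hcoeff
  simp only [coeff_C_mul] at hcoeff
  simp_rw [mul_left_comm _ (n ! : ℚ), ← mul_sum, ← hcoeff]
  simp [mul_left_comm _ ((j : ℚ) ^ n), Nat.factorial_ne_zero]

namespace Finpartition

theorem parts_eq_singleton_of_card_eq_one {α : Type*} [Lattice α] [OrderBot α]
    {a : α} (P : Finpartition a) (h : #P.parts = 1) : P.parts = {a} := by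
  obtain ⟨b, hb⟩ := card_eq_one.1 h
  have hsup := P.sup_parts
  rw [hb, sup_singleton, id] at hsup
  rw [hb, hsup]

variable {α β : Type*} [DecidableEq α] {s : Finset α}

theorem ext_part {P Q : Finpartition s} (h : ∀ a ∈ s, P.part a = Q.part a) : P = Q := by
  ext t
  constructor
  · intro ht
    obtain ⟨a, ha, rfl⟩ := P.part_surjOn ht
    exact h a ha ▸ Q.part_mem.2 ha
  · intro ht
    obtain ⟨a, ha, rfl⟩ := Q.part_surjOn ht
    exact (h a ha).symm ▸ P.part_mem.2 ha

-- A map `s → β` is the same as its partition into fibres together with an injective labelling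
-- of the fibres.
def labellingFun (x : Σ P : Finpartition s, P.parts ↪ β) (a : s) : β :=
  x.2 ⟨x.1.part a, x.1.part_mem.2 a.2⟩

theorem labellingFun_eq_iff (x : Σ P : Finpartition s, P.parts ↪ β) (a b : s) :
    labellingFun x a = labellingFun x b ↔ (a : α) ∈ x.1.part b := by
  rw [labellingFun, labellingFun, x.2.injective.eq_iff, Subtype.mk.injEq,
    x.1.mem_part_iff_part_eq_part a.2 b.2]

theorem labellingFun_injective : Function.Injective (labellingFun (s := s) (β := β)) := by
  rintro ⟨P, g⟩ ⟨Q, h⟩ hgh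
  obtain rfl : P = Q := by
    refine ext_part fun a ha => ?_
    ext b
    by_cases hb : b ∈ s
    · have := labellingFun_eq_iff ⟨P, g⟩ ⟨b, hb⟩ ⟨a, ha⟩
      rw [hgh, labellingFun_eq_iff] at this
      exact this.symm
    · exact iff_of_false (fun h' => hb (P.part_subset a h')) (fun h' => hb (Q.part_subset a h'))
  congr
  ext ⟨t, ht⟩
  obtain ⟨a, ha, rfl⟩ := P.part_surjOn ht
  exact congrFun hgh ⟨a, ha⟩

theorem labellingFun_surjective : Function.Surjective (labellingFun (s := s) (β := β)) := by
  classical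
  intro f
  let F : α → Option β := fun a => if h : a ∈ s then some (f ⟨a, h⟩) else none
  let P := ofSetSetoid (Setoid.ker F) s
  have mem_part : ∀ a b : s, (b : α) ∈ P.part a ↔ f a = f b := fun a b => by
    simp [P, F, mem_part_ofSetSetoid_iff_rel, Setoid.ker_def]
  let rep : P.parts → s := fun t =>
    ⟨(P.nonempty_of_mem_parts t.2).choose, P.subset t.2 (P.nonempty_of_mem_parts t.2).choose_spec⟩
  have rep_mem : ∀ t : P.parts, (rep t : α) ∈ (t : Finset α) := fun t =>
    (P.nonempty_of_mem_parts t.2).choose_spec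
  have part_rep : ∀ t : P.parts, P.part (rep t) = t := fun t => P.part_eq_of_mem t.2 (rep_mem t)
  refine ⟨⟨P, ⟨f ∘ rep, fun t u htu => ?_⟩⟩, funext fun a => ?_⟩
  · apply Subtype.ext
    rw [← part_rep t, ← part_rep u]
    exact (P.part_eq_of_mem (P.part_mem.2 (rep t).2) ((mem_part _ _).2 htu)).symm
  · exact ((mem_part a _).1 (rep_mem _)).symm

theorem pow_card_eq_sum_descFactorial (s : Finset α) (j : ℕ) :
    j ^ #s = ∑ P : Finpartition s, j.descFactorial #P.parts := by
  classical
  calc j ^ #s = Fintype.card (s → Fin j) := by simp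
    _ = Fintype.card (Σ P : Finpartition s, P.parts ↪ Fin j) :=
      (Fintype.card_congr <| .ofBijective _ ⟨labellingFun_injective, labellingFun_surjective⟩).symm
    _ = _ := by simp [Fintype.card_embedding_eq]

theorem sum_card_smul_eq_sum_filter {M : Type*} [AddCommMonoid M] (s : Finset α) (t : Finset ℕ)
    (f : ℕ → M) :
    ∑ k ∈ t, Nat.card {P : Finpartition s // #P.parts = k} • f k =
      ∑ P : Finpartition s with #P.parts ∈ t, f #P.parts := by
  rw [← sum_fiberwise_eq_sum_filter']
  refine sum_congr rfl fun k _ => ?_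
  rw [sum_const, Nat.card_eq_fintype_card, Fintype.card_subtype]

theorem sum_choose_mul_factorial_mul_card (s : Finset α) (j : ℕ) :
    ∑ k ∈ range (j + 1), (j.choose k : ℚ) * (k ! * Nat.card {P : Finpartition s // #P.parts = k}) =
      j ^ #s := by
  have h := sum_card_smul_eq_sum_filter s (range (j + 1)) j.descFactorial
  rw [sum_filter_of_ne fun P _ hP => mem_range.2 <| Nat.lt_succ_of_le <| not_lt.1 <|
    mt Nat.descFactorial_eq_zero_iff_lt.2 hP, ← pow_card_eq_sum_descFactorial] at h
  rw [← Nat.cast_pow, ← h]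
  push_cast [smul_eq_mul, Nat.descFactorial_eq_factorial_mul_choose]
  exact sum_congr rfl fun k _ => by ring

theorem factorial_mul_card_eq_coeff (s : Finset α) (k : ℕ) :
    (k ! : ℚ) * Nat.card {P : Finpartition s // #P.parts = k} =
      (#s)! * coeff #s ((exp ℚ - 1) ^ k) :=
  congrFun (eq_of_forall_sum_choose_mul_eq
    (a := fun k => (k ! : ℚ) * Nat.card {P : Finpartition s // #P.parts = k})
    (b := fun k => (#s)! * coeff #s ((exp ℚ - 1) ^ k)) fun j => by
      rw [sum_choose_mul_factorial_mul_card, sum_choose_mul_coeff_exp_sub_one_pow]) k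

theorem card_eq_stirling (s : Finset α) (k : ℕ) :
    Nat.card {P : Finpartition s // #P.parts = k} = stirling #s k := by
  have h := factorial_mul_card_eq_coeff (univ : Finset (Fin #s)) k
  rw [card_univ, Fintype.card_fin, ← factorial_mul_card_eq_coeff s k] at h
  exact_mod_cast (mul_left_cancel₀ (by positivity) h).symm

theorem sum_card_parts_eq_sum_stirling (s : Finset α) (f : ℕ → ℕ) :
    ∑ P : Finpartition s, f #P.parts = ∑ k ∈ range (#s + 1), stirling #s k * f k := by
  rw [← sum_filter_of_ne (p := fun P : Finpartition s => #P.parts ∈ range (#s + 1))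
    fun P _ _ => mem_range.2 (Nat.lt_succ_of_le P.card_parts_le_card),
    ← sum_card_smul_eq_sum_filter]
  simp only [card_eq_stirling, smul_eq_mul]

end Finpartition

theorem factorial_mul_stirling (n k : ℕ) :
    (k ! : ℚ) * stirling n k = n ! * coeff n ((exp ℚ - 1) ^ k) := by
  have h := Finpartition.factorial_mul_card_eq_coeff (univ : Finset (Fin n)) k
  rwa [card_univ, Fintype.card_fin] at h

namespace HyperPartition

instance finite : (m : ℕ) → {α : Type} → [DecidableEq α] → (s : Finset α) →
    Finite (HyperPartition m s)
  | 0, _, _, _ => inferInstanceAs (Finite PUnit)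
  | m + 1, _, _, s =>
    have := fun P : Finpartition s => finite m P.parts
    inferInstanceAs (Finite (Σ P : Finpartition s, HyperPartition m P.parts))

variable {α : Type} [DecidableEq α]

theorem card_succ (m : ℕ) (s : Finset α) :
    Nat.card (HyperPartition (m + 1) s) =
      ∑ P : Finpartition s, Nat.card (HyperPartition m P.parts) :=
  Nat.card_sigma

theorem card_eq_hyperBell (m : ℕ) (s : Finset α) :
    Nat.card (HyperPartition m s) = hyperBell m #s := by
  induction m generalizing α with
  | zero => rfl
  | succ m ih =>
    have card_succ_eq : ∀ {β : Type} [DecidableEq β] (t : Finset β),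
        Nat.card (HyperPartition (m + 1) t) =
          ∑ k ∈ range (#t + 1), stirling #t k * hyperBell m k := by
      intro β _ t
      simp_rw [card_succ, ih]
      exact Finpartition.sum_card_parts_eq_sum_stirling t (hyperBell m)
    rw [card_succ_eq, hyperBell, card_succ_eq, card_univ, Fintype.card_fin]

theorem card_outerBlocks_eq_one (m : ℕ) {s : Finset α} (hs : s.Nonempty) :
    Nat.card {p : HyperPartition (m + 1) s // outerBlocks (m + 1) p = 1} =
      Nat.card (HyperPartition m s) := by
  induction m generalizing α with
  | zero =>
    refine (Nat.card_eq_one_iff_unique.2 ⟨⟨?_⟩, ⟨⟨.indiscrete hs.ne_empty, ⟨⟩⟩, card_singleton s⟩⟩).trans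
      (Nat.card_unique (α := PUnit)).symm
    rintro ⟨⟨P, ⟨⟩⟩, hP⟩ ⟨⟨Q, ⟨⟩⟩, hQ⟩
    obtain rfl : P = Q := Finpartition.ext <| by
      rw [P.parts_eq_singleton_of_card_eq_one hP, Q.parts_eq_singleton_of_card_eq_one hQ]
    rfl
  | succ m ih =>
    calc Nat.card {p : HyperPartition (m + 2) s // outerBlocks (m + 2) p = 1}
        = Nat.card (Σ P : Finpartition s,
            {q : HyperPartition (m + 1) P.parts // outerBlocks (m + 1) q = 1}) :=
          Nat.card_congr
            { toFun p := ⟨p.1.1, p.1.2, p.2⟩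
              invFun p := ⟨⟨p.1, p.2.1⟩, p.2.2⟩ }
      _ = ∑ P : Finpartition s, Nat.card (HyperPartition m P.parts) := by
          rw [Nat.card_sigma]
          exact sum_congr rfl fun P _ => ih (P.parts_nonempty hs.ne_empty)
      _ = Nat.card (HyperPartition (m + 1) s) := (card_succ m s).symm

end HyperPartition

theorem hyperBell_succ (m n : ℕ) :
    hyperBell (m + 1) n = ∑ k ∈ range (n + 1), stirling n k * hyperBell m k := by
  rw [hyperBell, HyperPartition.card_succ]
  simp_rw [HyperPartition.card_eq_hyperBell]
  rw [Finpartition.sum_card_parts_eq_sum_stirling, card_univ, Fintype.card_fin]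

theorem coeff_psComp (f g : ℚ⟦X⟧) (n : ℕ) :
    coeff n (psComp f g) = ∑ i ∈ range (n + 1), coeff i f * coeff n (g ^ i) := by
  simp [psComp, coeff_C_mul]

theorem constantCoeff_psComp (f g : ℚ⟦X⟧) : constantCoeff (psComp f g) = constantCoeff f := by
  rw [← coeff_zero_eq_constantCoeff_apply, ← coeff_zero_eq_constantCoeff_apply, coeff_psComp]
  simp

theorem psComp_eq_subst (f : ℚ⟦X⟧) {g : ℚ⟦X⟧} (hg : constantCoeff g = 0) :
    psComp f g = f.subst g := by
  ext n
  rw [coeff_psComp, coeff_subst' (.of_constantCoeff_zero' hg),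
    finsum_eq_sum_of_support_subset (s := range (n + 1))]
  · simp only [smul_eq_mul]
  · intro i hi
    by_contra h
    exact hi (by simp [coeff_pow_eq_zero_of_lt hg (not_lt.1 (mt mem_range.2 h))])

theorem constantCoeff_E (m : ℕ) : constantCoeff (E m) = 1 := by
  cases m <;> simp [E, constantCoeff_psComp]

theorem E_succ_eq_subst (m : ℕ) : E (m + 1) = subst (exp ℚ - 1) (E m) := by
  have hexp : constantCoeff (exp ℚ - 1) = 0 := by simp
  have hE : ∀ m, constantCoeff (E m - 1) = 0 := fun m => by simp [constantCoeff_E]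
  have subst_one : subst (exp ℚ - 1) (1 : ℚ⟦X⟧) = 1 := by
    rw [← coe_substAlgHom (.of_constantCoeff_zero' hexp), map_one]
  induction m with
  | zero => exact psComp_eq_subst _ hexp
  | succ m ih =>
    calc E (m + 2) = subst (E (m + 1) - 1) (exp ℚ) := psComp_eq_subst _ (hE _)
      _ = subst (subst (exp ℚ - 1) (E m - 1)) (exp ℚ) := by
          rw [ih, subst_sub (.of_constantCoeff_zero' hexp), subst_one]
      _ = subst (exp ℚ - 1) (subst (E m - 1) (exp ℚ)) :=
          (subst_comp_subst_apply (.of_constantCoeff_zero' (hE m))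
            (.of_constantCoeff_zero' hexp) _).symm
      _ = subst (exp ℚ - 1) (E (m + 1)) := by rw [← psComp_eq_subst _ (hE m)]; rfl

theorem bell_succ (m n : ℕ) :
    bell (m + 1) n = ∑ k ∈ range (n + 1), stirling n k * bell m k := by
  rw [bell, E_succ_eq_subst, ← psComp_eq_subst _ (by simp), coeff_psComp, mul_sum]
  refine sum_congr rfl fun k _ => ?_
  rw [bell, mul_left_comm, ← factorial_mul_stirling]
  ring

theorem hyperBell_eq_bell (m n : ℕ) : (hyperBell m n : ℚ) = bell m n := by
  induction m generalizing n with
  | zero => simp [hyperBell, bell, E, coeff_exp, HyperPartition, Nat.factorial_ne_zero]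
  | succ m ih =>
    rw [hyperBell_succ, bell_succ]
    push_cast
    simp_rw [ih]

/-- `S^(m)(n,1) = Bₙ^(m−1)` for `m ≥ 1`, `n ≥ 1`. -/
theorem stmt14 (m n : ℕ) (hm : 1 ≤ m) (hn : 1 ≤ n) :
    (hyperStirling m n 1 : ℚ) = bell (m - 1) n := by
  obtain ⟨m, rfl⟩ := Nat.exists_eq_add_of_le' hm
  rw [Nat.add_sub_cancel, hyperStirling, HyperPartition.card_outerBlocks_eq_one m
    (univ_nonempty_iff.2 ⟨⟨0, hn⟩⟩), ← hyperBell, hyperBell_eq_bell]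
end
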